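/- arXiv:2401.04640 — 2 statements merged into one kernel-verified Lean document; each statement's English description precedes it below -/
import Mathlib

section
/- Let F : ℝⁿ → ℝ ∪ {+∞} be proper closed convex with nonempty minimizer set X* and minimal value F*, let γ > 0 and q ∈ [1,2), and let F_γ be the Moreau envelope of F. Fix x₀. Suppose F satisfies q-growth with constant κ > 0 on the level set {y : F(y) ≤ F(x₀)}, i.e. F(y) − F* ≥ (κ/q)‖y − ȳ‖^q for all such y (ȳ the Euclidean projection of y onto X*), and suppose there is R > 0 such that ‖x − x*‖ ≤ R for every x with F_γ(x) ≤ F_γ(x₀) and every x* ∈ X*. Then for every x with F_γ(x) ≤ F_γ(x₀): F_γ(x) − F* ≥ κ²γ/(2(κγ + R^{2−q})²) · ‖x − x̄‖², where x̄ is the Euclidean projection of x onto X*. -/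
/-! The infimum defining `F_γ(x)` is attained at `p = prox_{γF}(x)`, since the Moreau objective
is lower semicontinuous with compact sublevel sets, and `F(p) ≤ F_γ(x) ≤ F_γ(x₀) ≤ F(x₀)`, so the
`q`-growth bound applies at `p`. With `s = dist(x, X*)`, `a = ‖p - x‖` and `b = dist(p, X*)` we have
`s ≤ a + b`, `s ≤ R` and `F_γ(x) - F* ≥ (κ/q) b^q + a²/(2γ)`. As `t² ≤ t^q R^{2-q}` for `0 ≤ t ≤ R`,
either `s²` (if `s ≤ b`) or `b²` (if `b < s`) is at most `R^{2-q} b^q`; in the first case the growth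
term alone, in the second a weighted Cauchy–Schwarz inequality, gives
`F_γ(x) - F* ≥ κ s² / (2(κγ + R^{2-q}))`, which dominates the claimed bound. -/

open Set

lemma sq_le_rpow_mul_rpow_sub {x R q : ℝ} (hx : 0 ≤ x) (hxR : x ≤ R) (hq : q ≤ 2) :
    x ^ 2 ≤ x ^ q * R ^ (2 - q) := by
  calc x ^ 2 = x ^ (q + (2 - q)) := by norm_num
    _ = x ^ q * x ^ (2 - q) := Real.rpow_add' hx (by norm_num)
    _ ≤ x ^ q * R ^ (2 - q) := by gcongr

lemma mul_sq_le_of_sq_le_mul {κ γ t a b s B : ℝ} (hκ : 0 < κ) (hγ : 0 < γ) (ht : 0 < t)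
    (hs : 0 ≤ s) (hsab : s ≤ a + b)
    (hB : s ^ 2 ≤ t * B ∨ b ^ 2 ≤ t * B) :
    κ / (2 * (κ * γ + t)) * s ^ 2 ≤ κ / 2 * B + 1 / (2 * γ) * a ^ 2 := by
  have hκγ : 0 < κ * γ := mul_pos hκ hγ
  rcases hB with hs2 | hb2
  · calc κ / (2 * (κ * γ + t)) * s ^ 2 ≤ κ / (2 * t) * s ^ 2 := by gcongr; linarith
      _ ≤ κ / (2 * t) * (t * B) := by gcongr
      _ = κ / 2 * B := by field_simp
      _ ≤ κ / 2 * B + 1 / (2 * γ) * a ^ 2 := by simp only [le_add_iff_nonneg_right]; positivity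
  · -- Cauchy–Schwarz with weights `γ` and `t / κ`
    have hcs : κ * γ * t * (a + b) ^ 2 ≤ (κ * γ + t) * (t * a ^ 2 + κ * γ * b ^ 2) := by
      nlinarith [sq_nonneg (t * a - κ * γ * b)]
    calc κ / (2 * (κ * γ + t)) * s ^ 2 ≤ κ / (2 * (κ * γ + t)) * (a + b) ^ 2 := by gcongr
      _ ≤ 1 / (2 * γ) * a ^ 2 + κ / (2 * t) * b ^ 2 := by
        rw [div_mul_eq_mul_div, div_le_iff₀ (by positivity)]
        field_simp
        nlinarith
      _ ≤ 1 / (2 * γ) * a ^ 2 + κ / (2 * t) * (t * B) := by gcongr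
      _ = κ / 2 * B + 1 / (2 * γ) * a ^ 2 := by field_simp; ring

lemma growth_const_mul_sq_le {κ γ q R a b s : ℝ} (hκ : 0 < κ) (hγ : 0 < γ) (hq : 0 < q)
    (hq2 : q ≤ 2) (hR : 0 < R) (hb : 0 ≤ b) (hs : 0 ≤ s) (hsR : s ≤ R)
    (hsab : s ≤ a + b) :
    κ ^ 2 * γ / (2 * (κ * γ + R ^ (2 - q)) ^ 2) * s ^ 2 ≤ κ / q * b ^ q + 1 / (2 * γ) * a ^ 2 := by
  set t := R ^ (2 - q)
  have ht : 0 < t := Real.rpow_pos_of_pos hR _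
  have hB : s ^ 2 ≤ t * b ^ q ∨ b ^ 2 ≤ t * b ^ q := by
    rcases le_total s b with hsb | hbs
    · left
      calc s ^ 2 ≤ s ^ q * t := sq_le_rpow_mul_rpow_sub hs hsR hq2
        _ ≤ t * b ^ q := by rw [mul_comm]; gcongr
    · right
      rw [mul_comm]
      exact sq_le_rpow_mul_rpow_sub hb (hbs.trans hsR) hq2
  have hconst : κ ^ 2 * γ / (2 * (κ * γ + t) ^ 2) ≤ κ / (2 * (κ * γ + t)) := by
    rw [div_le_div_iff₀ (by positivity) (by positivity)]
    nlinarith [mul_pos (mul_pos hκ hκ) (mul_pos hγ ht), mul_pos hκ (mul_pos ht ht)]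
  calc κ ^ 2 * γ / (2 * (κ * γ + t) ^ 2) * s ^ 2 ≤ κ / (2 * (κ * γ + t)) * s ^ 2 := by
        gcongr
    _ ≤ κ / 2 * b ^ q + 1 / (2 * γ) * a ^ 2 := mul_sq_le_of_sq_le_mul hκ hγ ht hs hsab hB
    _ ≤ κ / q * b ^ q + 1 / (2 * γ) * a ^ 2 := by gcongr

theorem EReal.exists_eq_coe_of_ne_top_of_le {a : EReal} (ha : a ≠ ⊤) {m : ℝ} (hm : (m : EReal) ≤ a) :
    ∃ r : ℝ, a = r :=
  ⟨_, (EReal.coe_toReal ha ((EReal.bot_lt_coe m).trans_le hm).ne').symm⟩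

theorem LowerSemicontinuous.isClosed_setOf_eq_of_forall_le {α β : Type*} [TopologicalSpace α]
    [LinearOrder β] [TopologicalSpace β] [ClosedIicTopology β] {f : α → β}
    (hf : LowerSemicontinuous f) {c : β} (hc : ∀ y, c ≤ f y) : IsClosed {y | f y = c} := by
  convert hf.isClosed_preimage c using 1
  ext y
  exact ⟨le_of_eq, fun h => h.antisymm (hc y)⟩

theorem LowerSemicontinuous.exists_forall_le_of_isCompact_preimage_Iic {α β : Type*}
    [TopologicalSpace α] [LinearOrder β] {f : α → β} (hf : LowerSemicontinuous f) (x₀ : α)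
    (hK : IsCompact (f ⁻¹' Iic (f x₀))) : ∃ p, ∀ u, f p ≤ f u := by
  obtain ⟨p, hp, hpmin⟩ := (hf.lowerSemicontinuousOn _).exists_isMinOn (s := f ⁻¹' Iic (f x₀))
    ⟨x₀, le_rfl⟩ hK
  refine ⟨p, fun u => ?_⟩
  by_cases hu : f u ≤ f x₀
  · exact hpmin hu
  · exact hp.trans (not_le.mp hu).le

theorem LowerSemicontinuous.exists_forall_add_sq_norm_le {E : Type*} [NormedAddCommGroup E]
    [ProperSpace E] {F : E → EReal} {γ : ℝ} (hF : LowerSemicontinuous F) {m : ℝ}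
    (hm : ∀ u, (m : EReal) ≤ F u) (hγ : 0 < γ) (x : E) {u₀ : E} (hu₀ : F u₀ ≠ ⊤) :
    ∃ p, ∀ u, F p + ((1 / (2 * γ) * ‖p - x‖ ^ 2 : ℝ) : EReal)
      ≤ F u + ((1 / (2 * γ) * ‖u - x‖ ^ 2 : ℝ) : EReal) := by
  set φ : E → EReal := fun u => F u + ((1 / (2 * γ) * ‖u - x‖ ^ 2 : ℝ) : EReal)
  have hφ : LowerSemicontinuous φ :=
    hF.add' (continuous_coe_real_ereal.comp (by fun_prop)).lowerSemicontinuous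
      fun _ => EReal.continuousAt_add (.inr (EReal.coe_ne_bot _)) (.inr (EReal.coe_ne_top _))
  refine hφ.exists_forall_le_of_isCompact_preimage_Iic u₀
    (Metric.isCompact_of_isClosed_isBounded (hφ.isClosed_preimage _) ?_)
  obtain ⟨r, hr⟩ := EReal.exists_eq_coe_of_ne_top_of_le hu₀ (hm u₀)
  set A := r + 1 / (2 * γ) * ‖u₀ - x‖ ^ 2
  refine Metric.isBounded_closedBall (x := x) (r := √(2 * γ * (A - m))) |>.subset fun u hu => ?_
  have hle : m + 1 / (2 * γ) * ‖u - x‖ ^ 2 ≤ A := by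
    rw [← EReal.coe_le_coe_iff, EReal.coe_add, EReal.coe_add, ← hr]
    exact (add_le_add_left (hm u) _).trans hu
  have hc : 0 ≤ 1 / (2 * γ) * ‖u - x‖ ^ 2 := by positivity
  rw [Metric.mem_closedBall, dist_eq_norm, Real.le_sqrt (norm_nonneg _) (by nlinarith)]
  field_simp at hle
  linarith

theorem IsClosed.exists_mem_forall_norm_sub_le {E : Type*} [NormedAddCommGroup E] [ProperSpace E]
    {s : Set E} (hs : IsClosed s) (hne : s.Nonempty)
    (y : E) : ∃ ybar ∈ s, ∀ z ∈ s, ‖y - ybar‖ ≤ ‖y - z‖ := by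
  obtain ⟨ybar, hybar, hd⟩ := hs.exists_infDist_eq_dist hne y
  exact ⟨ybar, hybar, fun z hz => by
    simpa only [← dist_eq_norm, ← hd] using Metric.infDist_le_dist_of_mem hz⟩

theorem moreau_envelope_q_growth_general (n : ℕ)
    (F : EuclideanSpace ℝ (Fin n) → EReal)
    (hclosed : LowerSemicontinuous F)
    (Fs : ℝ) (Xs : Set (EuclideanSpace ℝ (Fin n)))
    (hXs : Xs = {y | F y = (Fs : EReal)})
    (hmin : ∀ y, (Fs : EReal) ≤ F y)
    (γ q : ℝ) (hγ : 0 < γ) (hq1 : 1 ≤ q) (hq2 : q < 2)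
    (Fγ : EuclideanSpace ℝ (Fin n) → EReal)
    (hFγ : ∀ x, Fγ x = ⨅ u, F u + ((1 / (2 * γ) * ‖u - x‖ ^ 2 : ℝ) : EReal))
    (x₀ : EuclideanSpace ℝ (Fin n)) (κ : ℝ) (hκ : 0 < κ)
    (hgrowth : ∀ y, F y ≤ F x₀ → ∀ ybar ∈ Xs, (∀ z ∈ Xs, ‖y - ybar‖ ≤ ‖y - z‖) →
      ((Fs + κ / q * ‖y - ybar‖ ^ q : ℝ) : EReal) ≤ F y)
    (R : ℝ) (hR : 0 < R)
    (hbound : ∀ x, Fγ x ≤ Fγ x₀ → ∀ xs ∈ Xs, ‖x - xs‖ ≤ R) :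
    ∀ x, Fγ x ≤ Fγ x₀ → ∀ xbar ∈ Xs, (∀ z ∈ Xs, ‖x - xbar‖ ≤ ‖x - z‖) →
      ((Fs + κ ^ 2 * γ / (2 * (κ * γ + R ^ (2 - q)) ^ 2) * ‖x - xbar‖ ^ 2 : ℝ) : EReal)
        ≤ Fγ x := by
  intro x hx xbar hxbar hnear
  have hFxbar : F xbar = Fs := by rw [hXs] at hxbar; exact hxbar
  -- `p` is `prox_{γF}(x)`
  obtain ⟨p, hp⟩ := hclosed.exists_forall_add_sq_norm_le hmin hγ x (u₀ := xbar) (by simp [hFxbar])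
  have hFγx : Fγ x = F p + ((1 / (2 * γ) * ‖p - x‖ ^ 2 : ℝ) : EReal) :=
    (hFγ x).trans (le_antisymm (iInf_le _ p) (le_iInf hp))
  have hFp_le : F p ≤ Fγ x := hFγx ▸ le_add_of_nonneg_right (EReal.coe_nonneg.2 (by positivity))
  have hFp_x₀ : F p ≤ F x₀ := calc
    F p ≤ Fγ x := hFp_le
    _ ≤ Fγ x₀ := hx
    _ ≤ F x₀ := by simpa using (hFγ x₀).trans_le (iInf_le _ x₀)
  have hFp_top : F p ≠ ⊤ := (hFp_le.trans (hFγx.trans_le (hp xbar))).trans_lt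
    (EReal.add_lt_top (by simp [hFxbar]) (EReal.coe_ne_top _)) |>.ne
  obtain ⟨fp, hfp⟩ := EReal.exists_eq_coe_of_ne_top_of_le hFp_top (hmin p)
  obtain ⟨pbar, hpbar, hpnear⟩ := (hXs ▸ hclosed.isClosed_setOf_eq_of_forall_le hmin :
    IsClosed Xs).exists_mem_forall_norm_sub_le ⟨xbar, hxbar⟩ p
  have hgr := hgrowth p hFp_x₀ pbar hpbar hpnear
  rw [hfp, EReal.coe_le_coe_iff] at hgr
  have htri : ‖x - xbar‖ ≤ ‖p - x‖ + ‖p - pbar‖ := calc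
    ‖x - xbar‖ ≤ ‖x - pbar‖ := hnear pbar hpbar
    _ ≤ ‖x - p‖ + ‖p - pbar‖ := norm_sub_le_norm_sub_add_norm_sub _ _ _
    _ = _ := by rw [norm_sub_rev]
  rw [hFγx, hfp, ← EReal.coe_add, EReal.coe_le_coe_iff]
  linarith [growth_const_mul_sq_le hκ hγ (by linarith) hq2.le hR (norm_nonneg _) (norm_nonneg _)
    (hbound x hx xbar hxbar) htri]

/-- let `F : ℝⁿ → ℝ ∪ {+∞}` (modeled as an `EReal`-valued function never
taking the value `⊥`) be proper closed convex, with nonempty minimizer set `X*` and (real)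
minimal value `F*`, let `γ > 0`, `q ∈ [1,2)`, and let `F_γ` be the Moreau envelope of `F`.
Fix `x₀`.  Assume `F` satisfies `q`-growth with constant `κ > 0` on the level set
`{y : F(y) ≤ F(x₀)}` (where `ybar` denotes the Euclidean projection of `y` onto `X*`),
and that there is `R > 0` with `‖x − x*‖ ≤ R` for every `x` with `F_γ(x) ≤ F_γ(x₀)` and
every `x* ∈ X*`.  Then for every `x` with `F_γ(x) ≤ F_γ(x₀)`:
`F_γ(x) − F* ≥ κ²γ/(2(κγ + R^{2−q})²) · ‖x − xbar‖²`. -/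
theorem moreau_envelope_q_growth (n : ℕ)
    (F : EuclideanSpace ℝ (Fin n) → EReal)
    (hbot : ∀ x, F x ≠ ⊥) (hproper : ∃ x, F x ≠ ⊤)
    (hclosed : LowerSemicontinuous F)
    (hconvex : ∀ (u v : EuclideanSpace ℝ (Fin n)) (a c : ℝ), 0 ≤ a → 0 ≤ c → a + c = 1 →
      F (a • u + c • v) ≤ (a : EReal) * F u + (c : EReal) * F v)
    (Fs : ℝ) (Xs : Set (EuclideanSpace ℝ (Fin n)))
    (hXsne : Xs.Nonempty) (hXs : Xs = {y | F y = (Fs : EReal)})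
    (hmin : ∀ y, (Fs : EReal) ≤ F y)
    (γ q : ℝ) (hγ : 0 < γ) (hq1 : 1 ≤ q) (hq2 : q < 2)
    (Fγ : EuclideanSpace ℝ (Fin n) → EReal)
    (hFγ : ∀ x, Fγ x = ⨅ u, F u + ((1 / (2 * γ) * ‖u - x‖ ^ 2 : ℝ) : EReal))
    (x₀ : EuclideanSpace ℝ (Fin n)) (κ : ℝ) (hκ : 0 < κ)
    (hgrowth : ∀ y, F y ≤ F x₀ → ∀ ybar ∈ Xs, (∀ z ∈ Xs, ‖y - ybar‖ ≤ ‖y - z‖) →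
      ((Fs + κ / q * ‖y - ybar‖ ^ q : ℝ) : EReal) ≤ F y)
    (R : ℝ) (hR : 0 < R)
    (hbound : ∀ x, Fγ x ≤ Fγ x₀ → ∀ xs ∈ Xs, ‖x - xs‖ ≤ R) :
    ∀ x, Fγ x ≤ Fγ x₀ → ∀ xbar ∈ Xs, (∀ z ∈ Xs, ‖x - xbar‖ ≤ ‖x - z‖) →
      ((Fs + κ ^ 2 * γ / (2 * (κ * γ + R ^ (2 - q)) ^ 2) * ‖x - xbar‖ ^ 2 : ℝ) : EReal)
        ≤ Fγ x :=
  moreau_envelope_q_growth_general n F hclosed Fs Xs hXs hmin γ q hγ hq1 hq2 Fγ hFγ x₀ κ hκ hgrowth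
    R hR hbound
end

section
/- Let F_γ : ℝⁿ → ℝ be convex and differentiable with block coordinate-wise Lipschitz gradient with constants Lᵢ > 0, and for each block i define the coordinate gradient step Tᵢx := x − (1/Lᵢ) Uᵢ Uᵢᵀ∇F_γ(x). Then for all x, y ∈ ℝⁿ: (1/N) ∑_{i=1}^{N} [ (1/2)‖Tᵢx − y‖₁² + F_γ(Tᵢx) ] ≤ (1/2)‖x − y‖₁² + (1 − 1/N) F_γ(x) + (1/N) F_γ(y). -/
noncomputable section
open scoped RealInnerProductSpace

/-- `blockProj b i x` models `Uᵢ Uᵢᵀ x`: the vector of `ℝⁿ` keeping the coordinates of block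
`i` (as given by the block assignment `b : Fin n → Fin N`) and zeroing the others. -/
def blockProj {n N : ℕ} (b : Fin n → Fin N) (i : Fin N) (x : EuclideanSpace ℝ (Fin n)) :
    EuclideanSpace ℝ (Fin n) :=
  (EuclideanSpace.equiv (Fin n) ℝ).symm (fun j => if b j = i then x j else 0)

/-- The squared weighted norm `‖x‖₁² = ∑ᵢ Lᵢ ‖Uᵢᵀ x‖²`. -/
def wnormSq {n N : ℕ} (b : Fin n → Fin N) (L : Fin N → ℝ)
    (x : EuclideanSpace ℝ (Fin n)) : ℝ :=
  ∑ i : Fin N, L i * ‖blockProj b i x‖ ^ 2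

/-- The coordinate gradient step `Tᵢ x = x − (1/Lᵢ) Uᵢ Uᵢᵀ ∇F_γ(x)`. -/
def coordStep {n N : ℕ} (b : Fin n → Fin N) (L : Fin N → ℝ)
    (Fγ : EuclideanSpace ℝ (Fin n) → ℝ) (i : Fin N) (x : EuclideanSpace ℝ (Fin n)) :
    EuclideanSpace ℝ (Fin n) :=
  x - (1 / L i) • blockProj b i (gradient Fγ x)

/-!
Write `gᵢ = Uᵢ Uᵢᵀ ∇F_γ(x)` and `Tᵢx = x + vᵢ` with `vᵢ = -(1/Lᵢ) gᵢ`. Since `vᵢ` lives in block `i`,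
the weighted norm changes only in that block, `‖Tᵢx − y‖₁² = ‖x − y‖₁² − 2⟪gᵢ, x − y⟫ + ‖gᵢ‖²/Lᵢ`,
while the descent lemma along block `i` gives `F_γ(Tᵢx) ≤ F_γ(x) − ‖gᵢ‖²/(2Lᵢ)`. The `‖gᵢ‖²` terms
cancel, and averaging over `i` leaves `−(1/N)⟪∇F_γ(x), x − y⟫ ≤ (1/N)(F_γ(y) − F_γ(x))` by convexity.
-/

open Set

theorem le_add_of_hasDerivAt_le_affine {φ φ' : ℝ → ℝ} {a c : ℝ}
    (hφ : ∀ t, HasDerivAt φ (φ' t) t) (hφ' : ∀ t ∈ Ico (0 : ℝ) 1, φ' t ≤ a + c * t) :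
    φ 1 ≤ φ 0 + a + c / 2 := by
  have hB : ∀ t, HasDerivAt (fun t => φ 0 + a * t + c / 2 * t ^ 2) (a + c * t) t := fun t => by
    refine ((((hasDerivAt_id' t).const_mul a).const_add (φ 0)).fun_add
      ((hasDerivAt_pow 2 t).const_mul (c / 2))).congr_deriv ?_
    simp only [Nat.cast_ofNat]; ring
  have := image_le_of_deriv_right_le_deriv_boundary
    (fun t _ => (hφ t).continuousAt.continuousWithinAt) (fun t _ => (hφ t).hasDerivWithinAt)
    (by simp) (fun t _ => (hB t).continuousAt.continuousWithinAt)
    (fun t _ => (hB t).hasDerivWithinAt) hφ' (right_mem_Icc.2 zero_le_one)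
  simpa using this

section InnerProductSpace

variable {E : Type*} [NormedAddCommGroup E] [InnerProductSpace ℝ E] [CompleteSpace E] {f : E → ℝ}

theorem HasGradientAt.hasDerivAt_comp_add_smul {g x v : E} {t : ℝ}
    (hf : HasGradientAt f g (x + t • v)) :
    HasDerivAt (fun s : ℝ => f (x + s • v)) ⟪g, v⟫ t := by
  have hline : HasDerivAt (fun s : ℝ => x + s • v) v t := by
    simpa using ((hasDerivAt_id t).smul_const v).const_add x
  have := hf.hasFDerivAt.comp_hasDerivAt t hline
  simpa only [Function.comp_def, InnerProductSpace.toDual_apply_apply] using this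

theorem ConvexOn.add_inner_gradient_le (hf : ConvexOn ℝ univ f) {x : E}
    (hfx : DifferentiableAt ℝ f x) (y : E) : f x + ⟪gradient f x, y - x⟫ ≤ f y := by
  have hline : ConvexOn ℝ univ (fun t : ℝ => f (x + t • (y - x))) := by
    simpa [Function.comp_def, AffineMap.lineMap_apply, add_comm] using
      hf.comp_affineMap (AffineMap.lineMap x y)
  have hderiv : HasDerivAt (fun t : ℝ => f (x + t • (y - x))) ⟪gradient f x, y - x⟫ 0 :=
    (by simpa using hfx.hasGradientAt : HasGradientAt f (gradient f x) (x + (0 : ℝ) • (y - x)))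
      |>.hasDerivAt_comp_add_smul
  have := hline.le_slope_of_hasDerivAt (mem_univ 0) (mem_univ 1) zero_lt_one hderiv
  rw [slope_def_field] at this
  simp only [zero_smul, add_zero, one_smul, add_sub_cancel, sub_zero, div_one] at this
  linarith

theorem le_add_inner_gradient_add_sq_of_inner_gradient_sub_le (hf : Differentiable ℝ f)
    {x h : E} {L : ℝ}
    (hL : ∀ t ∈ Ico (0 : ℝ) 1, ⟪gradient f (x + t • h) - gradient f x, h⟫ ≤ L * t * ‖h‖ ^ 2) :
    f (x + h) ≤ f x + ⟪gradient f x, h⟫ + L / 2 * ‖h‖ ^ 2 := by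
  have := le_add_of_hasDerivAt_le_affine (φ := fun t => f (x + t • h))
    (fun t => (hf _).hasGradientAt.hasDerivAt_comp_add_smul) (a := ⟪gradient f x, h⟫)
    (c := L * ‖h‖ ^ 2) fun t ht => by
      have := hL t ht
      rw [inner_sub_left] at this
      linarith
  simp only [zero_smul, add_zero, one_smul] at this
  linarith

end InnerProductSpace

section Blocks

variable {n N : ℕ} (b : Fin n → Fin N)

@[simp]
theorem blockProj_apply (i : Fin N) (x : EuclideanSpace ℝ (Fin n)) (j : Fin n) :
    blockProj b i x j = if b j = i then x j else 0 := rfl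

theorem blockProj_add (i : Fin N) (x y : EuclideanSpace ℝ (Fin n)) :
    blockProj b i (x + y) = blockProj b i x + blockProj b i y := by
  ext j; by_cases h : b j = i <;> simp [h]

theorem blockProj_smul (i : Fin N) (c : ℝ) (x : EuclideanSpace ℝ (Fin n)) :
    blockProj b i (c • x) = c • blockProj b i x := by
  ext j; by_cases h : b j = i <;> simp [h]

theorem blockProj_blockProj (i j : Fin N) (x : EuclideanSpace ℝ (Fin n)) :
    blockProj b j (blockProj b i x) = if i = j then blockProj b i x else 0 := by
  ext k; by_cases hk : b k = i <;> by_cases hij : i = j <;> simp_all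

theorem sum_blockProj (x : EuclideanSpace ℝ (Fin n)) : ∑ i : Fin N, blockProj b i x = x := by
  ext j; simp [WithLp.ofLp_sum, Finset.sum_apply]

theorem inner_blockProj_left (i : Fin N) (x y : EuclideanSpace ℝ (Fin n)) :
    ⟪blockProj b i x, y⟫ = ⟪x, blockProj b i y⟫ := by
  simp only [PiLp.inner_apply, blockProj_apply, RCLike.inner_apply, conj_trivial]
  refine Finset.sum_congr rfl fun j _ => ?_
  by_cases h : b j = i <;> simp [h]

theorem inner_blockProj_self (i : Fin N) (x : EuclideanSpace ℝ (Fin n)) :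
    ⟪x, blockProj b i x⟫ = ‖blockProj b i x‖ ^ 2 := by
  rw [← real_inner_self_eq_norm_sq, inner_blockProj_left, blockProj_blockProj, if_pos rfl]

theorem wnormSq_add_of_blockProj_eq (L : Fin N → ℝ) {i : Fin N} (u : EuclideanSpace ℝ (Fin n))
    {v : EuclideanSpace ℝ (Fin n)} (hv : blockProj b i v = v) :
    wnormSq b L (u + v) = wnormSq b L u + L i * (2 * ⟪u, v⟫ + ‖v‖ ^ 2) := by
  have hterm (j : Fin N) : L j * ‖blockProj b j (u + v)‖ ^ 2
      = L j * ‖blockProj b j u‖ ^ 2 + if i = j then L i * (2 * ⟪u, v⟫ + ‖v‖ ^ 2) else 0 := by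
    rw [blockProj_add, ← hv, blockProj_blockProj]
    split_ifs with hij
    · subst hij
      rw [norm_add_sq_real, inner_blockProj_left, blockProj_blockProj, if_pos rfl]
      ring
    · simp
  simp only [wnormSq, hterm, Finset.sum_add_distrib, Finset.sum_ite_eq, Finset.mem_univ, if_true]

theorem le_add_inner_gradient_add_sq_of_blockProj_eq {f : EuclideanSpace ℝ (Fin n) → ℝ}
    (hf : Differentiable ℝ f) {i : Fin N} {L : ℝ}
    (hlip : ∀ x h, blockProj b i h = h →
      ‖blockProj b i (gradient f (x + h) - gradient f x)‖ ≤ L * ‖h‖)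
    (x : EuclideanSpace ℝ (Fin n)) {v : EuclideanSpace ℝ (Fin n)} (hv : blockProj b i v = v) :
    f (x + v) ≤ f x + ⟪gradient f x, v⟫ + L / 2 * ‖v‖ ^ 2 := by
  refine le_add_inner_gradient_add_sq_of_inner_gradient_sub_le hf fun t ht => ?_
  have htv : blockProj b i (t • v) = t • v := by rw [blockProj_smul, hv]
  calc ⟪gradient f (x + t • v) - gradient f x, v⟫
      = ⟪blockProj b i (gradient f (x + t • v) - gradient f x), v⟫ := by
        rw [inner_blockProj_left, hv]
    _ ≤ ‖blockProj b i (gradient f (x + t • v) - gradient f x)‖ * ‖v‖ := real_inner_le_norm _ _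
    _ ≤ L * ‖t • v‖ * ‖v‖ := by gcongr; exact hlip x _ htv
    _ = L * t * ‖v‖ ^ 2 := by rw [norm_smul, Real.norm_of_nonneg ht.1]; ring

end Blocks

theorem half_wnormSq_coordStep_sub_add_le {n N : ℕ} (b : Fin n → Fin N) {L : Fin N → ℝ}
    {f : EuclideanSpace ℝ (Fin n) → ℝ} {i : Fin N} (hf : Differentiable ℝ f) (hLi : L i ≠ 0)
    (hlip : ∀ x h, blockProj b i h = h →
      ‖blockProj b i (gradient f (x + h) - gradient f x)‖ ≤ L i * ‖h‖)
    (x y : EuclideanSpace ℝ (Fin n)) :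
    (1 / 2) * wnormSq b L (coordStep b L f i x - y) + f (coordStep b L f i x)
      ≤ (1 / 2) * wnormSq b L (x - y) + f x - ⟪blockProj b i (gradient f x), x - y⟫ := by
  set g := blockProj b i (gradient f x)
  set v := -(1 / L i) • g
  have hv : blockProj b i v = v := by
    rw [blockProj_smul, blockProj_blockProj, if_pos rfl]
  have hstep : coordStep b L f i x = x + v := by
    rw [coordStep, sub_eq_add_neg, ← neg_smul]
  have hnorm : wnormSq b L (coordStep b L f i x - y)
      = wnormSq b L (x - y) + L i * (2 * ⟪x - y, v⟫ + ‖v‖ ^ 2) := by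
    rw [hstep, add_sub_right_comm, wnormSq_add_of_blockProj_eq b L (x - y) hv]
  have hdescent : f (coordStep b L f i x) ≤ f x + ⟪gradient f x, v⟫ + L i / 2 * ‖v‖ ^ 2 :=
    hstep ▸ le_add_inner_gradient_add_sq_of_blockProj_eq b hf hlip x hv
  have hinner_v : ⟪x - y, v⟫ = -(1 / L i) * ⟪g, x - y⟫ := by
    rw [inner_smul_right, real_inner_comm]
  have hgrad_v : ⟪gradient f x, v⟫ = -(1 / L i) * ‖g‖ ^ 2 := by
    rw [inner_smul_right, inner_blockProj_self]
  have hnorm_v : ‖v‖ ^ 2 = (1 / L i) ^ 2 * ‖g‖ ^ 2 := by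
    rw [norm_smul, mul_pow, Real.norm_eq_abs, sq_abs, neg_sq]
  rw [hnorm, hinner_v, hnorm_v]
  rw [hgrad_v, hnorm_v] at hdescent
  have hLinv : L i * (1 / L i) = 1 := mul_one_div_cancel hLi
  linear_combination hdescent + ((1 / L i) * ‖g‖ ^ 2 - ⟪g, x - y⟫) * hLinv

/-- if `F_γ` is convex and differentiable with block coordinate-wise
Lipschitz gradient (constants `Lᵢ > 0`), then for all `x, y`:
`(1/N) ∑ᵢ [ (1/2)‖Tᵢx − y‖₁² + F_γ(Tᵢx) ] ≤ (1/2)‖x − y‖₁² + (1 − 1/N) F_γ(x) + (1/N) F_γ(y)`. -/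
theorem coordinate_descent_one_step_convex (n N : ℕ) (hN : 0 < N) (b : Fin n → Fin N)
    (Fγ : EuclideanSpace ℝ (Fin n) → ℝ) (L : Fin N → ℝ) (hL : ∀ i, 0 < L i)
    (hconv : ConvexOn ℝ Set.univ Fγ) (hdiff : Differentiable ℝ Fγ)
    (hlip : ∀ (x h : EuclideanSpace ℝ (Fin n)) (i : Fin N), blockProj b i h = h →
      ‖blockProj b i (gradient Fγ (x + h) - gradient Fγ x)‖ ≤ L i * ‖h‖)
    (x y : EuclideanSpace ℝ (Fin n)) :
    (1 / (N : ℝ)) * ∑ i : Fin N,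
        ((1 / 2) * wnormSq b L (coordStep b L Fγ i x - y) + Fγ (coordStep b L Fγ i x))
      ≤ (1 / 2) * wnormSq b L (x - y) + (1 - 1 / (N : ℝ)) * Fγ x + (1 / (N : ℝ)) * Fγ y := by
  set A := (1 / 2) * wnormSq b L (x - y) + Fγ x
  have hsum : ∑ i : Fin N, (A - ⟪blockProj b i (gradient Fγ x), x - y⟫)
      = N * A - ⟪gradient Fγ x, x - y⟫ := by
    rw [Finset.sum_sub_distrib, ← sum_inner, sum_blockProj, Finset.sum_const, Finset.card_univ,
      Fintype.card_fin, nsmul_eq_mul]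
  have hfirst_order := hconv.add_inner_gradient_le (hdiff x) y
  have hNpos : (0 : ℝ) < N := Nat.cast_pos.2 hN
  calc (1 / (N : ℝ)) * ∑ i : Fin N,
        ((1 / 2) * wnormSq b L (coordStep b L Fγ i x - y) + Fγ (coordStep b L Fγ i x))
      ≤ (1 / (N : ℝ)) * (N * A - ⟪gradient Fγ x, x - y⟫) := by
        rw [← hsum]
        gcongr with i
        exact half_wnormSq_coordStep_sub_add_le b hdiff (hL i).ne' (hlip · · i) x y
    _ ≤ (1 / (N : ℝ)) * (N * A - (Fγ x - Fγ y)) := by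
        gcongr
        rw [← neg_sub y x, inner_neg_right]
        linarith
    _ = (1 / 2) * wnormSq b L (x - y) + (1 - 1 / (N : ℝ)) * Fγ x + (1 / (N : ℝ)) * Fγ y := by
        field_simp
        ring
end
end
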